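/- Let A be an associative algebra over a commutative ring k, M an A-bimodule, and π : M → A a generalized Rota-Baxter operator. Then the bilinear multiplication on A ⊕ M defined by (a, m) *_π (b, n) := (a·_π n + m·_π b, π(m)·n + m·π(n)), where a·_π n := aπ(n) − π(a·n) and m·_π b := π(m)b − π(m·b), is associative. -/
import Mathlib


section

variable {k A M : Type*} [CommRing k]
  [NonUnitalRing A] [Module k A] [SMulCommClass k A A] [IsScalarTower k A A]
  [AddCommGroup M] [Module k M]

/-- The multiplication `(a, m) *_π (b, n) := (a ·_π n + m ·_π b, π(m)·n + m·π(n))`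
on `A ⊕ M`, where `a ·_π n := a π(n) − π(a·n)` and `m ·_π b := π(m) b − π(m·b)`. -/
def piMul (l : A →ₗ[k] M →ₗ[k] M) (r : M →ₗ[k] A →ₗ[k] M)
    (π : M →ₗ[k] A) (x y : A × M) : A × M :=
  ((x.1 * π y.2 - π (l x.1 y.2)) + (π x.2 * y.1 - π (r x.2 y.1)),
    l (π x.2) y.2 + r x.2 (π y.2))

/-- If `π : M → A` is a generalized Rota-Baxter operator, then the
multiplication `*_π` on `A ⊕ M` is associative. -/
theorem stmt4
    (l : A →ₗ[k] M →ₗ[k] M) (r : M →ₗ[k] A →ₗ[k] M)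
    (hl : ∀ (a b : A) (m : M), l (a * b) m = l a (l b m))
    (hr : ∀ (m : M) (a b : A), r (r m a) b = r m (a * b))
    (hlr : ∀ (a : A) (m : M) (b : A), r (l a m) b = l a (r m b))
    (π : M →ₗ[k] A)
    (hπ : ∀ m n : M, π m * π n = π (l (π m) n + r m (π n))) :
    ∀ x y z : A × M,
      piMul l r π (piMul l r π x y) z = piMul l r π x (piMul l r π y z) := by
  have hπ' : ∀ m n : M, π m * π n = π (l (π m) n) + π (r m (π n)) := by
    intro m n; rw [hπ]; simp
  have hπc : ∀ (m n : M) (c : A),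
      π m * (π n * c) = π (l (π m) n) * c + π (r m (π n)) * c := by
    intro m n c; rw [← mul_assoc, hπ', add_mul]
  have hll : ∀ (m n : M) (p : M),
      l (π (l (π m) n)) p + l (π (r m (π n))) p = l (π m) (l (π n) p) := by
    intro m n p
    rw [← LinearMap.add_apply, ← map_add, ← hπ', hl]
  rintro ⟨a, m⟩ ⟨b, n⟩ ⟨c, p⟩
  simp only [piMul, Prod.mk.injEq, map_add, map_sub, map_neg, LinearMap.add_apply,
    LinearMap.sub_apply, LinearMap.neg_apply, add_mul, mul_add, sub_mul, mul_sub,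
    mul_assoc, hl, hr, hlr, hπ', hπc, hll]
  constructor <;> abel

end
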